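/- Let u be a sufficiently smooth solution of ∂²ₜu - ∂²_z u + m² u = 0 on [0, T] × [a, ℓ] satisfying the dynamical boundary condition (β₁' ∂²ₜ - β₁) u(t,ℓ) = -β₂ ∂_z u(t,ℓ) + β₂' ∂_z ∂²ₜ u(t,ℓ) at z = ℓ. Let ε(t) be the sum of the bulk energy (1/2)∫_{a+t}^{ℓ} ((∂ₜu)² + (∂_z u)² + m² u²) dz and the boundary energy ε_ℓ(t) of the previous statement. Then ε is non-increasing in t. Consequently, if u and ∂ₜu vanish at t = 0 on [a,ℓ], then u vanishes identically on the future half-diamond {(t,z) : 0 ≤ t ≤ ℓ - a, a + t ≤ z ≤ ℓ}. -/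

import Mathlib

/-!
Along the wave equation, the time derivative of the bulk density `(∂ₜu)² + (∂_z u)² + m² u²`
is `∂_z (2 ∂ₜu ∂_z u)`, so the bulk energy on `[a + t, ℓ]` changes by the flux `∂ₜu ∂_z u` at
the two ends minus half the density at the moving end `a + t`. The boundary energy is built so
that, under the dynamical boundary condition, its derivative cancels the flux at `ℓ`. What is
left, `-(1/2) ((∂ₜu + ∂_z u)² + m² u²)` at `z = a + t`, is non-positive. For vanishing Cauchy
data the energy starts at `0` and stays non-negative, so the bulk integral vanishes at all later
times; this forces `∂ₜu = 0` on the half-diamond, hence `u = 0` there.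
-/

open Set MeasureTheory

section PartialDerivatives

variable {E : Type*} [NormedAddCommGroup E] [NormedSpace ℝ E] {f : ℝ → ℝ → E} {t z : ℝ}

noncomputable def partialT (f : ℝ → ℝ → E) (t z : ℝ) : E := deriv (fun s => f s z) t

noncomputable def partialZ (f : ℝ → ℝ → E) (t z : ℝ) : E := deriv (f t) z

theorem hasDerivAt_partialT_fderiv (hf : DifferentiableAt ℝ (fun p : ℝ × ℝ => f p.1 p.2) (t, z)) :
    HasDerivAt (fun s => f s z) (fderiv ℝ (fun p : ℝ × ℝ => f p.1 p.2) (t, z) (1, 0)) t :=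
  hf.hasFDerivAt.comp_hasDerivAt (f := fun s : ℝ => (s, z)) t
    ((hasDerivAt_id t).prodMk (hasDerivAt_const t z))

theorem hasDerivAt_partialZ_fderiv (hf : DifferentiableAt ℝ (fun p : ℝ × ℝ => f p.1 p.2) (t, z)) :
    HasDerivAt (f t) (fderiv ℝ (fun p : ℝ × ℝ => f p.1 p.2) (t, z) (0, 1)) z :=
  hf.hasFDerivAt.comp_hasDerivAt (f := fun s : ℝ => (t, s)) z
    ((hasDerivAt_const z t).prodMk (hasDerivAt_id z))

theorem partialT_eq_fderiv (hf : DifferentiableAt ℝ (fun p : ℝ × ℝ => f p.1 p.2) (t, z)) :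
    partialT f t z = fderiv ℝ (fun p : ℝ × ℝ => f p.1 p.2) (t, z) (1, 0) :=
  (hasDerivAt_partialT_fderiv hf).deriv

theorem partialZ_eq_fderiv (hf : DifferentiableAt ℝ (fun p : ℝ × ℝ => f p.1 p.2) (t, z)) :
    partialZ f t z = fderiv ℝ (fun p : ℝ × ℝ => f p.1 p.2) (t, z) (0, 1) :=
  (hasDerivAt_partialZ_fderiv hf).deriv

theorem hasDerivAt_partialT (hf : DifferentiableAt ℝ (fun p : ℝ × ℝ => f p.1 p.2) (t, z)) :
    HasDerivAt (fun s => f s z) (partialT f t z) t :=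
  partialT_eq_fderiv hf ▸ hasDerivAt_partialT_fderiv hf

theorem hasDerivAt_partialZ (hf : DifferentiableAt ℝ (fun p : ℝ × ℝ => f p.1 p.2) (t, z)) :
    HasDerivAt (f t) (partialZ f t z) z :=
  partialZ_eq_fderiv hf ▸ hasDerivAt_partialZ_fderiv hf

theorem ContDiff.partialT {n m : WithTop ℕ∞} (hf : ContDiff ℝ n (fun p : ℝ × ℝ => f p.1 p.2))
    (hmn : m + 1 ≤ n) : ContDiff ℝ m (fun p : ℝ × ℝ => partialT f p.1 p.2) := by
  have hd := (hf.of_le (le_trans le_add_self hmn)).differentiable one_ne_zero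
  simp_rw [partialT_eq_fderiv (hd _)]
  exact (hf.fderiv_right hmn).clm_apply contDiff_const

theorem ContDiff.partialZ {n m : WithTop ℕ∞} (hf : ContDiff ℝ n (fun p : ℝ × ℝ => f p.1 p.2))
    (hmn : m + 1 ≤ n) : ContDiff ℝ m (fun p : ℝ × ℝ => partialZ f p.1 p.2) := by
  have hd := (hf.of_le (le_trans le_add_self hmn)).differentiable one_ne_zero
  simp_rw [partialZ_eq_fderiv (hd _)]
  exact (hf.fderiv_right hmn).clm_apply contDiff_const

theorem partialZ_partialT_comm (hf : ContDiff ℝ 2 (fun p : ℝ × ℝ => f p.1 p.2)) :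
    partialZ (partialT f) = partialT (partialZ f) := by
  funext t z
  set F := fun p : ℝ × ℝ => f p.1 p.2
  have hd := hf.differentiable two_ne_zero
  have hT : (fun p : ℝ × ℝ => partialT f p.1 p.2) = fun p => fderiv ℝ F p (1, 0) :=
    funext fun p => partialT_eq_fderiv (hd p)
  have hZ : (fun p : ℝ × ℝ => partialZ f p.1 p.2) = fun p => fderiv ℝ F p (0, 1) :=
    funext fun p => partialZ_eq_fderiv (hd p)
  have hdd := (hf.fderiv_right (m := 1) (by norm_num)).differentiable one_ne_zero (t, z)
  rw [partialZ_eq_fderiv ((hf.partialT (m := 1) (by norm_num)).differentiable one_ne_zero _),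
    partialT_eq_fderiv ((hf.partialZ (m := 1) (by norm_num)).differentiable one_ne_zero _), hT, hZ,
    fderiv_clm_apply hdd (differentiableAt_const _),
    fderiv_clm_apply hdd (differentiableAt_const _)]
  simpa using (hf.contDiffAt.isSymmSndFDerivAt (by simp)) (0, 1) (1, 0)

end PartialDerivatives

section MovingEndpoint

variable {E : Type*} [NormedAddCommGroup E] [NormedSpace ℝ E] [CompleteSpace E]
  {f f' : ℝ → ℝ → E} {a ℓ t₀ : ℝ}

theorem hasDerivAt_integral_upper_add_self (hf : Continuous fun p : ℝ × ℝ => f p.1 p.2) :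
    HasDerivAt (fun t => ∫ z in (a + t₀)..(a + t), f t z) (f t₀ (a + t₀)) t₀ := by
  rw [hasDerivAt_iff_isLittleO, Asymptotics.isLittleO_iff]
  intro c hc
  obtain ⟨δ, hδ, hclose⟩ := Metric.continuousAt_iff.1 (hf.continuousAt (x := (t₀, a + t₀))) c hc
  filter_upwards [Metric.ball_mem_nhds t₀ hδ] with t ht
  rw [Metric.mem_ball, Real.dist_eq] at ht
  have hbound : ∀ z ∈ uIoc (a + t₀) (a + t), ‖f t z - f t₀ (a + t₀)‖ ≤ c := by
    intro z hz
    have hz' : |z - (a + t₀)| ≤ |t - t₀| := by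
      rcases mem_uIoc.1 hz with h | h <;> rw [abs_le] <;> constructor <;>
        linarith [le_abs_self (t - t₀), neg_abs_le (t - t₀)]
    rw [← dist_eq_norm]
    refine (hclose (x := (t, z)) ?_).le
    rw [Prod.dist_eq, Real.dist_eq, Real.dist_eq]
    exact max_lt ht (hz'.trans_lt ht)
  have hint : IntervalIntegrable (f t) volume (a + t₀) (a + t) :=
    (hf.comp (Continuous.prodMk_right t)).intervalIntegrable _ _
  calc ‖(∫ z in (a + t₀)..(a + t), f t z) - (∫ z in (a + t₀)..(a + t₀), f t₀ z)
        - (t - t₀) • f t₀ (a + t₀)‖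
      = ‖∫ z in (a + t₀)..(a + t), (f t z - f t₀ (a + t₀))‖ := by
        rw [intervalIntegral.integral_sub hint intervalIntegrable_const]
        simp
    _ ≤ c * |(a + t) - (a + t₀)| := intervalIntegral.norm_integral_le_of_norm_le_const hbound
    _ = c * ‖t - t₀‖ := by rw [Real.norm_eq_abs, add_sub_add_left_eq_sub]

theorem hasDerivAt_integral_lower_add_self (hf : Continuous fun p : ℝ × ℝ => f p.1 p.2)
    (hf' : Continuous fun p : ℝ × ℝ => f' p.1 p.2)
    (hderiv : ∀ t z, HasDerivAt (fun s => f s z) (f' t z) t) :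
    HasDerivAt (fun t => ∫ z in (a + t)..ℓ, f t z)
      ((∫ z in (a + t₀)..ℓ, f' t₀ z) - f t₀ (a + t₀)) t₀ := by
  have hsplit : (fun t => ∫ z in (a + t)..ℓ, f t z)
      = fun t => (∫ z in (a + t₀)..ℓ, f t z) - ∫ z in (a + t₀)..(a + t), f t z := by
    funext t
    have hcont : Continuous (f t) := hf.comp (Continuous.prodMk_right t)
    rw [← intervalIntegral.integral_interval_sub_left (hcont.intervalIntegrable _ _)
      (hcont.intervalIntegrable _ _)]
  obtain ⟨C, hC⟩ := ((isCompact_closedBall t₀ 1).prod isCompact_uIcc).exists_bound_of_continuousOn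
    hf'.continuousOn (E := E)
  have hfixed : HasDerivAt (fun t => ∫ z in (a + t₀)..ℓ, f t z) (∫ z in (a + t₀)..ℓ, f' t₀ z) t₀ :=
    (intervalIntegral.hasDerivAt_integral_of_dominated_loc_of_deriv_le (bound := fun _ => C)
      (Metric.closedBall_mem_nhds t₀ one_pos)
      (.of_forall fun t => (hf.comp (Continuous.prodMk_right t)).aestronglyMeasurable)
      ((hf.comp (Continuous.prodMk_right t₀)).intervalIntegrable _ _)
      (hf'.comp (Continuous.prodMk_right t₀)).aestronglyMeasurable
      (.of_forall fun z hz t ht => hC (t, z) ⟨ht, uIoc_subset_uIcc hz⟩)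
      intervalIntegrable_const
      (.of_forall fun z _ t _ => hderiv t z)).2
  rw [hsplit]
  exact hfixed.sub (hasDerivAt_integral_upper_add_self hf)

end MovingEndpoint

theorem deriv_eq_zero_of_eqOn_Icc {E : Type*} [NormedAddCommGroup E] [NormedSpace ℝ E]
    {g : ℝ → E} {b c x : ℝ} (hbc : b < c) (hg : EqOn g 0 (Icc b c)) (hx : x ∈ Icc b c)
    (hd : DifferentiableAt ℝ g x) : deriv g x = 0 :=
  (uniqueDiffOn_Icc hbc x hx).eq_deriv _ hd.hasDerivAt.hasDerivWithinAt
    ((hasDerivWithinAt_const x _ 0).congr hg (hg hx))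

theorem eqOn_zero_of_integral_eq_zero {g : ℝ → ℝ} {b c : ℝ} (hbc : b < c)
    (hg : ContinuousOn g (Icc b c)) (hnn : ∀ x ∈ Icc b c, 0 ≤ g x)
    (hint : ∫ x in b..c, g x = 0) : EqOn g 0 (Icc b c) := by
  have hae := (intervalIntegral.integral_eq_zero_iff_of_le_of_nonneg_ae hbc.le
    (ae_restrict_of_forall_mem measurableSet_Ioc fun x hx => hnn x (Ioc_subset_Icc_self hx))
    (hg.intervalIntegrable_of_Icc hbc.le)).1 hint
  rw [Measure.restrict_congr_set Ioc_ae_eq_Icc] at hae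
  exact Measure.eqOn_Icc_of_ae_eq volume hbc.ne hae hg continuousOn_const

/-- The paper's `ε_ℓ`, with `U, W, V, Z` standing for `u, ∂_z u, ∂ₜu, ∂_z ∂ₜu` at `z = ℓ`. -/
noncomputable def boundaryEnergy (β₁ β₂ β₁' β₂' U W V Z : ℝ) : ℝ :=
  (1/2) * ( -(β₁ / β₂) * U^2
    + (β₁' * β₂ - β₁ * β₂')⁻¹ *
      ((β₁ * β₂' / Real.sqrt (-(β₂ * β₂'))) * U + Real.sqrt (-(β₂ * β₂')) * W)^2
    + (β₁' * β₂ - β₁ * β₂')⁻¹ * (-β₁' * V + β₂' * Z)^2 )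

section Boundary

variable {β₁ β₂ β₁' β₂' : ℝ}

theorem boundaryEnergy_nonneg (hβ : β₁ / β₂ ≤ 0) (hρ : 0 ≤ β₁' * β₂ - β₁ * β₂') (U W V Z : ℝ) :
    0 ≤ boundaryEnergy β₁ β₂ β₁' β₂' U W V Z := by
  unfold boundaryEnergy
  have := inv_nonneg.2 hρ
  have : 0 ≤ -(β₁ / β₂) := neg_nonneg.2 hβ
  positivity

theorem hasDerivAt_boundaryEnergy {U W V Z : ℝ → ℝ} {A B t : ℝ} (hββ : β₂ * β₂' < 0)
    (hρ : β₁' * β₂ - β₁ * β₂' ≠ 0) (hU : HasDerivAt U (V t) t) (hW : HasDerivAt W (Z t) t)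
    (hV : HasDerivAt V A t) (hZ : HasDerivAt Z B t)
    (hbc : β₁' * A - β₁ * U t = -β₂ * W t + β₂' * B) :
    HasDerivAt (fun s => boundaryEnergy β₁ β₂ β₁' β₂' (U s) (W s) (V s) (Z s))
      (-(V t * W t)) t := by
  set σ := Real.sqrt (-(β₂ * β₂'))
  set c := β₁ * β₂' / σ
  set q := β₁ / β₂
  set r := (β₁' * β₂ - β₁ * β₂')⁻¹
  have hσ2 : σ ^ 2 = -(β₂ * β₂') := Real.sq_sqrt (by linarith)
  have hσ : σ ≠ 0 := (Real.sqrt_pos.2 (by linarith)).ne'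
  have hβ₂ : β₂ ≠ 0 := by rintro rfl; simp at hββ
  have hcσ : c * σ = β₁ * β₂' := div_mul_cancel₀ _ hσ
  have hq : q * β₂ = β₁ := div_mul_cancel₀ _ hβ₂
  have hr : r * (β₁' * β₂ - β₁ * β₂') = 1 := inv_mul_cancel₀ hρ
  have hc2 : c ^ 2 = -(q * β₁ * β₂') := by
    rw [div_pow, hσ2, div_eq_iff (by simpa using hββ.ne), ← hq]
    ring
  have hD := ((((hU.pow 2).const_mul (-q)).add
    ((((hU.const_mul c).add (hW.const_mul σ)).pow 2).const_mul r)).add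
    ((((hV.const_mul (-β₁')).add (hZ.const_mul β₂')).pow 2).const_mul r)).const_mul (1/2 : ℝ)
  refine hD.congr_deriv ?_
  simp only [Pi.add_apply]
  linear_combination r * (U t * Z t + W t * V t) * hcσ + r * W t * Z t * hσ2
    + r * U t * V t * hc2 + (q * U t * V t - V t * W t) * hr - r * β₁' * U t * V t * hq
    - r * (-β₁' * V t + β₂' * Z t) * hbc

end Boundary

noncomputable def bulkDensity (msq : ℝ) (u : ℝ → ℝ → ℝ) (t z : ℝ) : ℝ :=
  (partialT u t z)^2 + (partialZ u t z)^2 + msq * (u t z)^2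

section Bulk

variable {u : ℝ → ℝ → ℝ} {a ℓ msq t z : ℝ}

theorem bulkDensity_nonneg (hmsq : 0 ≤ msq) : 0 ≤ bulkDensity msq u t z := by
  unfold bulkDensity; positivity

theorem continuous_bulkDensity (hu : ContDiff ℝ 1 (fun p : ℝ × ℝ => u p.1 p.2)) :
    Continuous fun p : ℝ × ℝ => bulkDensity msq u p.1 p.2 := by
  have hv := (hu.partialT (m := 0) (by norm_num)).continuous
  have hw := (hu.partialZ (m := 0) (by norm_num)).continuous
  have hu0 := hu.continuous
  unfold bulkDensity
  fun_prop

theorem hasDerivAt_bulkDensity (hu : ContDiff ℝ 2 (fun p : ℝ × ℝ => u p.1 p.2)) :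
    HasDerivAt (fun s => bulkDensity msq u s z)
      (2 * (partialT u t z * partialT (partialT u) t z + partialZ u t z * partialT (partialZ u) t z
        + msq * u t z * partialT u t z)) t := by
  have hv := hasDerivAt_partialT (z := z)
    ((hu.partialT (m := 1) (by norm_num)).differentiable one_ne_zero (t, z))
  have hw := hasDerivAt_partialT (z := z)
    ((hu.partialZ (m := 1) (by norm_num)).differentiable one_ne_zero (t, z))
  have hu0 := hasDerivAt_partialT (z := z) (hu.differentiable two_ne_zero (t, z))
  refine (((hv.pow 2).add (hw.pow 2)).add ((hu0.pow 2).const_mul msq)).congr_deriv ?_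
  ring

theorem hasDerivAt_integral_bulkDensity (hu : ContDiff ℝ 2 (fun p : ℝ × ℝ => u p.1 p.2))
    (hPDE : ∀ z ∈ uIcc (a + t) ℓ,
      partialT (partialT u) t z - partialZ (partialZ u) t z + msq * u t z = 0) :
    HasDerivAt (fun s => ∫ z in (a + s)..ℓ, bulkDensity msq u s z)
      (2 * (partialT u t ℓ * partialZ u t ℓ) - 2 * (partialT u t (a + t) * partialZ u t (a + t))
        - bulkDensity msq u t (a + t)) t := by
  have hv := hu.partialT (m := 1) (by norm_num)
  have hw := hu.partialZ (m := 1) (by norm_num)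
  have hcont_deriv : Continuous fun p : ℝ × ℝ =>
      2 * (partialT u p.1 p.2 * partialT (partialT u) p.1 p.2
        + partialZ u p.1 p.2 * partialT (partialZ u) p.1 p.2
        + msq * u p.1 p.2 * partialT u p.1 p.2) := by
    have := (hv.partialT (m := 0) le_rfl).continuous
    have := (hw.partialT (m := 0) le_rfl).continuous
    have := hv.continuous
    have := hw.continuous
    have := hu.continuous
    fun_prop
  have hflux : ∀ z, HasDerivAt (fun z => 2 * (partialT u t z * partialZ u t z))
      (2 * (partialZ (partialT u) t z * partialZ u t z
        + partialT u t z * partialZ (partialZ u) t z)) z :=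
    fun z => ((hasDerivAt_partialZ (hv.differentiable one_ne_zero (t, z))).mul
      (hasDerivAt_partialZ (hw.differentiable one_ne_zero (t, z)))).const_mul 2
  have hflux_int : ∫ z in (a + t)..ℓ, 2 * (partialT u t z * partialT (partialT u) t z
        + partialZ u t z * partialT (partialZ u) t z + msq * u t z * partialT u t z)
      = 2 * (partialT u t ℓ * partialZ u t ℓ)
        - 2 * (partialT u t (a + t) * partialZ u t (a + t)) := by
    rw [intervalIntegral.integral_congr
      (g := fun z => 2 * (partialZ (partialT u) t z * partialZ u t z
        + partialT u t z * partialZ (partialZ u) t z)) (fun z hz => by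
        rw [← partialZ_partialT_comm hu]
        linear_combination (2 * partialT u t z) * hPDE z hz),
      intervalIntegral.integral_eq_sub_of_hasDerivAt (fun z _ => hflux z)]
    have := (hv.partialZ (m := 0) le_rfl).continuous
    have := (hw.partialZ (m := 0) le_rfl).continuous
    have := hv.continuous
    have := hw.continuous
    exact Continuous.intervalIntegrable (by fun_prop) _ _
  exact (hasDerivAt_integral_lower_add_self (continuous_bulkDensity (hu.of_le one_le_two))
    hcont_deriv fun s z => hasDerivAt_bulkDensity hu).congr_deriv (by rw [hflux_int])

end Bulk

noncomputable def energy (u : ℝ → ℝ → ℝ) (a ℓ msq β₁ β₂ β₁' β₂' t : ℝ) : ℝ :=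
  (1/2) * (∫ z in (a + t)..ℓ, bulkDensity msq u t z)
    + boundaryEnergy β₁ β₂ β₁' β₂' (u t ℓ) (partialZ u t ℓ) (partialT u t ℓ)
      (partialZ (partialT u) t ℓ)

section Energy

variable {u : ℝ → ℝ → ℝ} {a ℓ msq β₁ β₂ β₁' β₂' t : ℝ}

theorem hasDerivAt_energy (hu : ContDiff ℝ 3 (fun p : ℝ × ℝ => u p.1 p.2)) (hββ : β₂ * β₂' < 0)
    (hρ : β₁' * β₂ - β₁ * β₂' ≠ 0) (ht : t ∈ Icc 0 (ℓ - a))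
    (hPDE : ∀ z ∈ Icc a ℓ, partialT (partialT u) t z - partialZ (partialZ u) t z + msq * u t z = 0)
    (hbc : β₁' * partialT (partialT u) t ℓ - β₁ * u t ℓ
      = -β₂ * partialZ u t ℓ + β₂' * partialZ (partialT (partialT u)) t ℓ) :
    HasDerivAt (energy u a ℓ msq β₁ β₂ β₁' β₂')
      (-(1/2) * ((partialT u t (a + t) + partialZ u t (a + t))^2 + msq * u t (a + t)^2)) t := by
  have hu2 : ContDiff ℝ 2 (fun p : ℝ × ℝ => u p.1 p.2) := hu.of_le (by norm_num)
  have hv := hu.partialT (m := 2) (by norm_num)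
  have hbulk := hasDerivAt_integral_bulkDensity hu2 (a := a) (ℓ := ℓ) (t := t) (msq := msq)
    fun z hz => hPDE z (by
      rw [uIcc_of_le (by linarith [ht.2])] at hz
      exact ⟨by linarith [ht.1, hz.1], hz.2⟩)
  have hW := hasDerivAt_partialT (z := ℓ)
    ((hu.partialZ (m := 2) (by norm_num)).differentiable two_ne_zero (t, ℓ))
  have hZ := hasDerivAt_partialT (z := ℓ)
    ((hv.partialZ (m := 1) (by norm_num)).differentiable one_ne_zero (t, ℓ))
  rw [← partialZ_partialT_comm hu2] at hW
  rw [← partialZ_partialT_comm hv] at hZ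
  have hU := hasDerivAt_partialT (z := ℓ) (hu2.differentiable two_ne_zero (t, ℓ))
  have hV := hasDerivAt_partialT (z := ℓ) (hv.differentiable two_ne_zero (t, ℓ))
  have hbdry := hasDerivAt_boundaryEnergy hββ hρ hU hW hV hZ hbc
  exact ((hbulk.const_mul (1/2)).add hbdry).congr_deriv (by unfold bulkDensity; ring)

theorem antitoneOn_energy (hu : ContDiff ℝ 3 (fun p : ℝ × ℝ => u p.1 p.2)) (hmsq : 0 ≤ msq)
    (hββ : β₂ * β₂' < 0) (hρ : β₁' * β₂ - β₁ * β₂' ≠ 0)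
    (hPDE : ∀ t ∈ Icc 0 (ℓ - a), ∀ z ∈ Icc a ℓ,
      partialT (partialT u) t z - partialZ (partialZ u) t z + msq * u t z = 0)
    (hbc : ∀ t ∈ Icc 0 (ℓ - a), β₁' * partialT (partialT u) t ℓ - β₁ * u t ℓ
      = -β₂ * partialZ u t ℓ + β₂' * partialZ (partialT (partialT u)) t ℓ) :
    AntitoneOn (energy u a ℓ msq β₁ β₂ β₁' β₂') (Icc 0 (ℓ - a)) := by
  have hD t (ht : t ∈ Icc 0 (ℓ - a)) := hasDerivAt_energy hu hββ hρ ht (hPDE t ht) (hbc t ht)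
  refine antitoneOn_of_hasDerivWithinAt_nonpos (convex_Icc _ _)
    (fun t ht => (hD t ht).continuousAt.continuousWithinAt)
    (fun t ht => (hD t (interior_subset ht)).hasDerivWithinAt) fun t _ => ?_
  have := mul_nonneg hmsq (sq_nonneg (u t (a + t)))
  nlinarith [sq_nonneg (partialT u t (a + t) + partialZ u t (a + t))]

theorem energy_zero_eq_zero (hu : ContDiff ℝ 2 (fun p : ℝ × ℝ => u p.1 p.2)) (haℓ : a < ℓ)
    (hdata : ∀ z ∈ Icc a ℓ, u 0 z = 0 ∧ partialT u 0 z = 0) :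
    energy u a ℓ msq β₁ β₂ β₁' β₂' 0 = 0 := by
  have hu0 : EqOn (u 0) 0 (Icc a ℓ) := fun z hz => (hdata z hz).1
  have hv0 : EqOn (partialT u 0) 0 (Icc a ℓ) := fun z hz => (hdata z hz).2
  have hw0 z (hz : z ∈ Icc a ℓ) : partialZ u 0 z = 0 :=
    deriv_eq_zero_of_eqOn_Icc haℓ hu0 hz
      (hasDerivAt_partialZ (hu.differentiable two_ne_zero (0, z))).differentiableAt
  have hℓ : ℓ ∈ Icc a ℓ := right_mem_Icc.2 haℓ.le
  have hvz : partialZ (partialT u) 0 ℓ = 0 :=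
    deriv_eq_zero_of_eqOn_Icc haℓ hv0 hℓ (hasDerivAt_partialZ
      ((hu.partialT (m := 1) (by norm_num)).differentiable one_ne_zero (0, ℓ))).differentiableAt
  have hbulk : ∫ z in a..ℓ, bulkDensity msq u 0 z = 0 := by
    rw [intervalIntegral.integral_congr (g := fun _ => 0) fun z hz => by
      rw [uIcc_of_le haℓ.le] at hz
      simp [bulkDensity, hu0 hz, hv0 hz, hw0 z hz]]
    simp
  simp [energy, boundaryEnergy, hbulk, hu0 hℓ, hv0 hℓ, hw0 ℓ hℓ, hvz]

theorem partialT_eq_zero_of_energy_nonpos (hu : ContDiff ℝ 1 (fun p : ℝ × ℝ => u p.1 p.2))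
    (hmsq : 0 ≤ msq) (hβ : β₁ / β₂ ≤ 0) (hρ : 0 ≤ β₁' * β₂ - β₁ * β₂') (ht : a + t < ℓ)
    (hE : energy u a ℓ msq β₁ β₂ β₁' β₂' t ≤ 0) : ∀ z ∈ Icc (a + t) ℓ, partialT u t z = 0 := by
  have hnn : 0 ≤ ∫ z in (a + t)..ℓ, bulkDensity msq u t z :=
    intervalIntegral.integral_nonneg ht.le fun _ _ => bulkDensity_nonneg hmsq
  have hbdry := boundaryEnergy_nonneg hβ hρ (u t ℓ) (partialZ u t ℓ) (partialT u t ℓ)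
    (partialZ (partialT u) t ℓ)
  unfold energy at hE
  have hzero := eqOn_zero_of_integral_eq_zero (g := bulkDensity msq u t) ht
    ((continuous_bulkDensity hu).comp (Continuous.prodMk_right t)).continuousOn
    (fun _ _ => bulkDensity_nonneg hmsq) (by linarith)
  intro z hz
  have h := hzero hz
  simp only [bulkDensity, Pi.zero_apply] at h
  nlinarith [sq_nonneg (partialT u t z), sq_nonneg (partialZ u t z),
    mul_nonneg hmsq (sq_nonneg (u t z))]

end Energy

/-- The total (bulk + boundary) energy on the right half-diamond is non-increasing;
consequently vanishing Cauchy data forces the solution to vanish on the future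
half-diamond. -/
theorem stmt3 (u : ℝ → ℝ → ℝ) (a ℓ T msq β₁ β₂ β₁' β₂' : ℝ) (haℓ : a < ℓ)
    (hT : ℓ - a ≤ T) (hmsq : 0 ≤ msq) (hββ : β₂ * β₂' < 0) (hβ12 : β₁ / β₂ ≤ 0)
    (hρ : 0 < β₁' * β₂ - β₁ * β₂')
    (hu : ContDiff ℝ 3 (fun p : ℝ × ℝ => u p.1 p.2))
    (hPDE : ∀ t ∈ Icc (0:ℝ) T, ∀ z ∈ Icc a ℓ,
      deriv (fun s => deriv (fun s' => u s' z) s) t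
        - deriv (deriv (u t)) z + msq * u t z = 0)
    (hbc : ∀ t ∈ Icc (0:ℝ) T,
      β₁' * deriv (fun s => deriv (fun s' => u s' ℓ) s) t - β₁ * u t ℓ
        = -β₂ * deriv (u t) ℓ
          + β₂' * deriv (fun w => deriv (fun s => deriv (fun s' => u s' w) s) t) ℓ) :
    ∀ ε : ℝ → ℝ,
      (ε = fun t =>
        (1/2) * (∫ z in (a + t)..ℓ,
          ((deriv (fun s => u s z) t)^2 + (deriv (u t) z)^2 + msq * (u t z)^2))
        + (1/2) *
          ( -(β₁ / β₂) * (u t ℓ)^2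
            + (β₁' * β₂ - β₁ * β₂')⁻¹ *
              ((β₁ * β₂' / Real.sqrt (-(β₂ * β₂'))) * u t ℓ
                + Real.sqrt (-(β₂ * β₂')) * deriv (u t) ℓ)^2
            + (β₁' * β₂ - β₁ * β₂')⁻¹ *
              (-β₁' * deriv (fun s => u s ℓ) t
                + β₂' * deriv (fun w => deriv (fun s => u s w) t) ℓ)^2 )) →
      AntitoneOn ε (Icc (0:ℝ) (ℓ - a)) ∧
      ((∀ z ∈ Icc a ℓ, u 0 z = 0 ∧ deriv (fun s => u s z) 0 = 0) →
        ∀ t z : ℝ, 0 ≤ t → t ≤ ℓ - a → a + t ≤ z → z ≤ ℓ → u t z = 0) := by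
  rintro ε rfl
  have hanti : AntitoneOn (energy u a ℓ msq β₁ β₂ β₁' β₂') (Icc 0 (ℓ - a)) :=
    antitoneOn_energy hu hmsq hββ hρ.ne' (fun t ht => hPDE t ⟨ht.1, ht.2.trans hT⟩)
      (fun t ht => hbc t ⟨ht.1, ht.2.trans hT⟩)
  refine ⟨hanti, fun hdata t z ht0 htℓ hzt hzℓ => ?_⟩
  have hE0 := energy_zero_eq_zero (msq := msq) (β₁ := β₁) (β₂ := β₂) (β₁' := β₁') (β₂' := β₂')
    (hu.of_le (by norm_num)) haℓ hdata
  -- Only times `s < t` are used, where `a + s < ℓ` keeps `[a + s, ℓ]` non-degenerate.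
  have hv s (hs : s ∈ Ico 0 t) : partialT u s z = 0 :=
    partialT_eq_zero_of_energy_nonpos (hu.of_le (by norm_num)) hmsq hβ12 hρ.le (by linarith [hs.2])
      ((hanti ⟨le_rfl, by linarith⟩ ⟨hs.1, by linarith [hs.2]⟩ hs.1).trans hE0.le)
      z ⟨by linarith [hs.2], hzℓ⟩
  have hd := hu.differentiable (by norm_num)
  have hconst := constant_of_has_deriv_right_zero (f := fun s => u s z)
    (fun s _ => (hasDerivAt_partialT (hd (s, z))).continuousAt.continuousWithinAt)
    (fun s hs => hv s hs ▸ (hasDerivAt_partialT (hd (s, z))).hasDerivWithinAt) t ⟨ht0, le_rfl⟩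
  rw [hconst, (hdata z ⟨by linarith, hzℓ⟩).1]
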